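/- arXiv:1812.02488 — 3 statements merged into one kernel-verified Lean document; each statement's English description precedes it below -/
import Mathlib

section
/- Let n be a positive integer and r ∈ {1, 4} with d = n² + r squarefree and d ≡ 5 (mod 8), and let p be an odd prime dividing n. If h(d) = 1, then n = p in the case r = 4, and n = 2p in the case r = 1. (Consequently, a squarefree d ≡ 5 (mod 8) of the form n² + 4 or n² + 1 with class number 1 and with n having an odd prime factor must be of the form p² + 4 or 4p² + 1 for a prime p.) -/
/-!
Write `c² = r`. Class number one makes `𝓞 K` a UFD. The odd prime `p` divides
`n² = (√d - c)(√d + c)` but neither factor, since their traces are `∓2c`; so `p` is not prime,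
hence not irreducible, and some `α ∈ 𝓞 K` has norm `±p`. As `d` is squarefree,
`2α = z + w√d` with `z, w ∈ ℤ`, so `|z² - d w²| = 4p`. If `n ≠ p` (resp. `n ≠ 2p`), then
`d ≡ 5 (mod 8)` forces `n ≥ 3p` (resp. `n ≥ 6p`). In that range, multiplying by the unit
`(n - √d)/c` of norm `-1` strictly decreases `|w|`, so the descent ends at `w = 0` and makes
`4p` a square, which is absurd.
-/

open NumberField Module

theorem not_isSquare_of_squarefree {R : Type*} [CommMonoid R] {d : R} (hd : Squarefree d)
    (h1 : ¬IsUnit d) : ¬IsSquare d := by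
  rintro ⟨r, rfl⟩
  exact h1 ((hd r dvd_rfl).mul (hd r dvd_rfl))

theorem not_isSquare_four_mul {p : ℤ} (hp : ¬IsSquare p) : ¬IsSquare (4 * p) := by
  rintro ⟨r, hr⟩
  obtain ⟨s, rfl⟩ : 2 ∣ r := Int.prime_two.dvd_of_dvd_pow (n := 2) ⟨2 * p, by rw [sq, ← hr]; ring⟩
  exact hp ⟨s, by linarith⟩

theorem exists_intCast_eq_of_squarefree_mul_sq {d z : ℤ} (hd : Squarefree d) {q : ℚ}
    (h : d * q ^ 2 = z) : ∃ w : ℤ, (w : ℚ) = q := by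
  have hcop : IsCoprime ((q.den : ℤ) ^ 2) (q.num ^ 2) :=
    (Int.isCoprime_iff_gcd_eq_one.mpr (by rw [Int.gcd_comm]; exact q.reduced)).pow
  have hden : ((q.den : ℤ) ^ 2) ∣ d * q.num ^ 2 := by
    refine ⟨z, ?_⟩
    rw [← Rat.num_div_den q, div_pow, mul_div_assoc', div_eq_iff (by positivity)] at h
    exact_mod_cast (by rw [h]; push_cast; ring : ((d : ℚ) * q.num ^ 2) = (q.den : ℤ) ^ 2 * z)
  have hunit : IsUnit (q.den : ℤ) := hd _ (by rw [← sq]; exact hcop.dvd_of_dvd_mul_right hden)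
  have hden1 : q.den = 1 := by simpa using Int.isUnit_iff_natAbs_eq.mp hunit
  exact ⟨q.num, by rw [← Rat.num_div_den q, hden1]; simp⟩

theorem two_dvd_sub_mul_of_two_dvd {a b n : ℤ}
    (h : 2 ∣ a ^ 2 - (n ^ 2 + 2 ^ 2) * b ^ 2) : 2 ∣ a - b * n := by
  simp only [← even_iff_two_dvd, parity_simps] at h ⊢
  tauto

theorem le_abs_sq_sub_mul_sq {a b c n : ℤ} (ha : 0 ≤ a) (hb : 1 ≤ b) (hn : 0 ≤ n)
    (hcb : c * b ≤ |a - b * n|) : c * (n - c) ≤ |a ^ 2 - (n ^ 2 + c ^ 2) * b ^ 2| := by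
  have hlow : c * b * (b * n) ≤ |a ^ 2 - n ^ 2 * b ^ 2| := by
    rw [show a ^ 2 - n ^ 2 * b ^ 2 = (a - b * n) * (a + b * n) by ring, abs_mul,
      abs_of_nonneg (by positivity : 0 ≤ a + b * n)]
    exact mul_le_mul hcb (by linarith) (by positivity) (abs_nonneg _)
  have hup : |a ^ 2 - n ^ 2 * b ^ 2| ≤ |a ^ 2 - (n ^ 2 + c ^ 2) * b ^ 2| + c ^ 2 * b ^ 2 := by
    calc |a ^ 2 - n ^ 2 * b ^ 2| = |(a ^ 2 - (n ^ 2 + c ^ 2) * b ^ 2) + c ^ 2 * b ^ 2| := by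
          ring_nf
      _ ≤ _ := by grw [abs_add_le, abs_of_nonneg (by positivity : 0 ≤ c ^ 2 * b ^ 2)]
  have hscaled : b ^ 2 * (c * (n - c)) ≤ |a ^ 2 - (n ^ 2 + c ^ 2) * b ^ 2| := by nlinarith
  rcases le_or_gt (c * (n - c)) 0 with h | h
  · exact h.trans (abs_nonneg _)
  · nlinarith [mul_le_mul_of_nonneg_right (one_le_pow₀ hb : 1 ≤ b ^ 2) h.le]

/-- With `c k = a - b n`, the pair `(b c - n k, k)` is `(a + b√d) (n - √d) / c`, where
`(n - √d) / c` has norm `-1`; either `|k| < |b|`, or `le_abs_sq_sub_mul_sq` contradicts `hMn`. -/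
theorem abs_sq_sub_mul_sq_ne {c n M : ℤ} (hc : 0 < c) (hM : ¬IsSquare M) (hMn : M < c * (n - c))
    (hdvd : ∀ a b : ℤ, |a ^ 2 - (n ^ 2 + c ^ 2) * b ^ 2| = M → c ∣ a - b * n) (a b : ℤ) :
    |a ^ 2 - (n ^ 2 + c ^ 2) * b ^ 2| ≠ M := by
  induction hN : b.natAbs using Nat.strong_induction_on generalizing a b with
  | _ N ih =>
  intro h
  have habs : |(|a|) ^ 2 - (n ^ 2 + c ^ 2) * |b| ^ 2| = M := by rwa [sq_abs, sq_abs]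
  obtain ⟨k, hk⟩ := hdvd _ _ habs
  have hn : 0 ≤ n := by nlinarith [abs_nonneg (a ^ 2 - (n ^ 2 + c ^ 2) * b ^ 2)]
  rcases (abs_nonneg b).eq_or_lt with hb | hb
  · exact hM ⟨|a|, by rw [← habs, ← hb]; simp [sq, abs_mul_abs_self]⟩
  rcases lt_or_ge |k| |b| with hkb | hkb
  · rw [Int.abs_eq_natAbs, Int.abs_eq_natAbs] at hkb
    refine ih k.natAbs (by omega) (|b| * c - n * k) k rfl ?_
    rw [← habs, show |a| = c * k + |b| * n by linarith, ← abs_neg]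
    ring_nf
  · refine (le_abs_sq_sub_mul_sq (abs_nonneg a) hb hn ?_).not_gt (habs ▸ hMn)
    rw [hk, abs_mul, abs_of_pos hc]
    exact mul_le_mul_of_nonneg_left hkb hc.le

section QuadraticCoordinates

variable {K : Type*} [Field K] [CharZero K] {δ : K}

theorem linearIndependent_one_of_notMem_range (hδ : δ ∉ Set.range (Rat.cast : ℚ → K)) :
    LinearIndependent ℚ ![1, δ] := by
  refine linearIndependent_fin2.mpr ⟨fun h => hδ ⟨0, by simp_all⟩, fun q hq => hδ ⟨q⁻¹, ?_⟩⟩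
  simp only [Matrix.cons_val_one, Matrix.cons_val_zero, Rat.smul_def] at hq
  rw [Rat.cast_inv, inv_eq_of_mul_eq_one_right hq]

theorem notMem_range_ratCast_of_sq_eq {d : ℤ} (hsq : δ ^ 2 = d) (hd : ¬IsSquare d) :
    δ ∉ Set.range (Rat.cast : ℚ → K) := by
  rintro ⟨q, rfl⟩
  have hq : ((q ^ 2 : ℚ) : K) = ((d : ℚ) : K) := by push_cast; exact hsq
  exact hd (Rat.isSquare_intCast_iff.mp ⟨q, by rw [← Rat.cast_injective hq, sq]⟩)

variable (hrank : finrank ℚ K = 2) (hδ : δ ∉ Set.range (Rat.cast : ℚ → K))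

noncomputable def oneSqrtBasis : Basis (Fin 2) ℚ K :=
  basisOfLinearIndependentOfCardEqFinrank (linearIndependent_one_of_notMem_range hδ)
    (by rw [hrank, Fintype.card_fin])

theorem coe_oneSqrtBasis : ⇑(oneSqrtBasis hrank hδ) = ![1, δ] :=
  coe_basisOfLinearIndependentOfCardEqFinrank _ _

theorem oneSqrtBasis_repr (u v : ℚ) : (oneSqrtBasis hrank hδ).repr (u + v * δ) = ![u, v] := by
  have : (u : K) + v * δ = ∑ i, ![u, v] i • oneSqrtBasis hrank hδ i := by
    simp [Fin.sum_univ_two, coe_oneSqrtBasis, Rat.smul_def]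
  rw [this, Basis.repr_sum_self]

include hrank hδ

theorem exists_ratCast_add_mul (x : K) : ∃ u v : ℚ, x = u + v * δ := by
  refine ⟨(oneSqrtBasis hrank hδ).repr x 0, (oneSqrtBasis hrank hδ).repr x 1, ?_⟩
  conv_lhs => rw [← (oneSqrtBasis hrank hδ).sum_repr x]
  simp [Fin.sum_univ_two, coe_oneSqrtBasis, Rat.smul_def]

variable {d : ℚ} (hsq : δ ^ 2 = d)
include hsq

theorem leftMulMatrix_oneSqrtBasis (u v : ℚ) :
    Algebra.leftMulMatrix (oneSqrtBasis hrank hδ) (u + v * δ) = !![u, d * v; v, u] := by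
  have hmul : ((u : K) + v * δ) * δ = ((d * v : ℚ) : K) + (u : ℚ) * δ := by
    push_cast; linear_combination (v : K) * hsq
  ext i j
  fin_cases i <;> fin_cases j <;>
    simp [Algebra.leftMulMatrix_eq_repr_mul, coe_oneSqrtBasis, hmul, -map_add, -Rat.cast_mul,
      oneSqrtBasis_repr]

theorem trace_ratCast_add_mul (u v : ℚ) : Algebra.trace ℚ K (u + v * δ) = 2 * u := by
  rw [Algebra.trace_eq_matrix_trace (oneSqrtBasis hrank hδ),
    leftMulMatrix_oneSqrtBasis hrank hδ hsq, Matrix.trace_fin_two_of]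
  ring

theorem norm_ratCast_add_mul (u v : ℚ) :
    Algebra.norm ℚ ((u : K) + v * δ) = u ^ 2 - d * v ^ 2 := by
  rw [Algebra.norm_eq_matrix_det (oneSqrtBasis hrank hδ),
    leftMulMatrix_oneSqrtBasis hrank hδ hsq, Matrix.det_fin_two_of]
  ring

end QuadraticCoordinates

section RingOfIntegers

variable {K : Type*} [Field K] [NumberField K]

theorem isUnit_iff_natAbs_norm_eq_one {x : 𝓞 K} : IsUnit x ↔ (Algebra.norm ℤ x).natAbs = 1 := by
  rw [NumberField.isUnit_iff_norm, RingOfIntegers.coe_norm, ← Algebra.coe_norm_int,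
    ← Int.cast_abs, Int.cast_eq_one, Int.abs_eq_natAbs, Nat.cast_eq_one]

theorem exists_natAbs_norm_eq_of_not_prime (hrank : finrank ℚ K = 2) [DecompositionMonoid (𝓞 K)]
    {p : ℕ} (hp : p.Prime) (hnp : ¬Prime (p : 𝓞 K)) : ∃ α : 𝓞 K, (Algebra.norm ℤ α).natAbs = p := by
  have hnorm : (Algebra.norm ℤ (p : 𝓞 K)).natAbs = p ^ 2 := by
    rw [← map_natCast (algebraMap ℤ (𝓞 K)), Algebra.norm_algebraMap, RingOfIntegers.rank, hrank]
    simp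
  have hpu : ¬IsUnit (p : 𝓞 K) := by
    rw [isUnit_iff_natAbs_norm_eq_one, hnorm]
    exact (Nat.one_lt_pow two_ne_zero hp.one_lt).ne'
  obtain ⟨α, β, hαβ, hα, hβ⟩ : ∃ α β : 𝓞 K, (p : 𝓞 K) = α * β ∧ ¬IsUnit α ∧ ¬IsUnit β := by
    by_contra! h
    exact hnp (Irreducible.prime ⟨hpu, fun α β hαβ => or_iff_not_imp_left.mpr (h α β hαβ)⟩)
  rw [isUnit_iff_natAbs_norm_eq_one] at hα hβ
  rw [hαβ, map_mul, Int.natAbs_mul] at hnorm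
  obtain ⟨i, hi, hαi⟩ := (Nat.dvd_prime_pow hp).mp (Dvd.intro _ hnorm)
  refine ⟨α, ?_⟩
  interval_cases i
  · exact absurd hαi hα
  · simpa using hαi
  · rw [hαi] at hnorm
    exact absurd ((Nat.mul_eq_left (pow_pos hp.pos 2).ne').mp hnorm) hβ

variable {δ : K} {d : ℤ} (hrank : finrank ℚ K = 2) (hδ : δ ∉ Set.range (Rat.cast : ℚ → K))
  (hsq : δ ^ 2 = d)
include hrank hδ hsq

theorem exists_sq_sub_mul_sq_eq_four_mul_norm (hd : Squarefree d) (α : 𝓞 K) :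
    ∃ z w : ℤ, z ^ 2 - d * w ^ 2 = 4 * Algebra.norm ℤ α := by
  obtain ⟨u, v, huv⟩ := exists_ratCast_add_mul hrank hδ (α : K)
  have htr : (Algebra.trace ℤ (𝓞 K) α : ℚ) = 2 * u := by
    rw [Algebra.coe_trace_int, huv,
      trace_ratCast_add_mul hrank hδ (d := (d : ℚ)) (by exact_mod_cast hsq)]
  have hN : (Algebra.norm ℤ α : ℚ) = u ^ 2 - d * v ^ 2 := by
    rw [Algebra.coe_norm_int, huv,
      norm_ratCast_add_mul hrank hδ (d := (d : ℚ)) (by exact_mod_cast hsq)]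
  obtain ⟨w, hw⟩ := exists_intCast_eq_of_squarefree_mul_sq hd (q := 2 * v)
    (z := Algebra.trace ℤ (𝓞 K) α ^ 2 - 4 * Algebra.norm ℤ α) (by push_cast; rw [htr, hN]; ring)
  refine ⟨Algebra.trace ℤ (𝓞 K) α, w, ?_⟩
  exact_mod_cast (by rw [hw, htr, hN]; ring :
    (Algebra.trace ℤ (𝓞 K) α : ℚ) ^ 2 - d * (w : ℚ) ^ 2 = 4 * Algebra.norm ℤ α)

theorem not_intCast_dvd_add_intCast {p c : ℤ} (hpc : ¬p ∣ 2 * c) {x : 𝓞 K} (hx : (x : K) = δ) :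
    ¬(p : 𝓞 K) ∣ x + c := by
  rintro ⟨γ, hγ⟩
  have htr : Algebra.trace ℤ (𝓞 K) (x + c) = 2 * c := by
    have : ((x + c : 𝓞 K) : K) = ((c : ℚ) : K) + ((1 : ℚ) : K) * δ := by
      simp [hx, add_comm]
    exact_mod_cast (by rw [Algebra.coe_trace_int, this,
      trace_ratCast_add_mul hrank hδ (d := (d : ℚ)) (by exact_mod_cast hsq)] :
      (Algebra.trace ℤ (𝓞 K) (x + c) : ℚ) = 2 * c)
  refine hpc ⟨Algebra.trace ℤ (𝓞 K) γ, ?_⟩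
  rw [← htr, hγ, ← zsmul_eq_mul, map_zsmul, smul_eq_mul]

theorem exists_abs_sq_sub_mul_sq_eq_four_mul [DecompositionMonoid (𝓞 K)] (hd : Squarefree d)
    {p : ℕ} (hp : p.Prime) {c : ℤ} (hpc : ¬(p : ℤ) ∣ 2 * c) (hpd : (p : ℤ) ∣ d - c ^ 2) :
    ∃ z w : ℤ, |z ^ 2 - d * w ^ 2| = 4 * p := by
  have hint : IsIntegral ℤ δ := .of_pow two_pos (by
    rw [hsq, ← eq_intCast (algebraMap ℤ K)]; exact isIntegral_algebraMap)
  set x : 𝓞 K := ⟨δ, hint⟩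
  have hnp : ¬Prime (p : 𝓞 K) := by
    intro hprime
    obtain ⟨m, hm⟩ := hpd
    have hdvd : (p : 𝓞 K) ∣ (x + (-c : ℤ)) * (x + c) := ⟨m, by
      apply RingOfIntegers.coe_injective
      have hm' : (d : K) - c ^ 2 = p * m := by exact_mod_cast hm
      simp only [map_mul, map_add, map_intCast, map_natCast]
      exact (by push_cast; linear_combination hsq + hm' : (δ + (-c : ℤ)) * (δ + c) = p * m)⟩
    rcases hprime.dvd_or_dvd hdvd with h | h
    · exact not_intCast_dvd_add_intCast hrank hδ hsq (p := p) (by rwa [mul_neg, dvd_neg]) rfl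
        (by exact_mod_cast h)
    · exact not_intCast_dvd_add_intCast hrank hδ hsq hpc rfl (by exact_mod_cast h)
  obtain ⟨α, hα⟩ := exists_natAbs_norm_eq_of_not_prime hrank hp hnp
  obtain ⟨z, w, hzw⟩ := exists_sq_sub_mul_sq_eq_four_mul_norm hrank hδ hsq hd α
  exact ⟨z, w, by rw [hzw, abs_mul, Int.abs_eq_natAbs (Algebra.norm ℤ α), hα]; norm_num⟩

end RingOfIntegers

theorem odd_of_sq_add_four_mod_eight {n : ℕ} (h : (n ^ 2 + 4) % 8 = 5) : Odd n := by
  rcases Nat.even_or_odd n with ⟨m, rfl⟩ | hn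
  · ring_nf at h; omega
  · exact hn

theorem exists_odd_eq_two_mul_of_sq_add_one_mod_eight {n : ℕ} (h : (n ^ 2 + 1) % 8 = 5) :
    ∃ m, Odd m ∧ n = 2 * m := by
  rcases Nat.even_or_odd n with ⟨m, rfl⟩ | ⟨m, rfl⟩
  · refine ⟨m, ?_, (two_mul m).symm⟩
    rcases Nat.even_or_odd m with ⟨k, rfl⟩ | hm
    · ring_nf at h; omega
    · exact hm
  · ring_nf at h; omega

theorem three_mul_le_of_odd_of_dvd {n p : ℕ} (hn : Odd n) (hpn : p ∣ n) (hne : n ≠ p) :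
    3 * p ≤ n := by
  obtain ⟨t, rfl⟩ := hpn
  obtain ⟨s, rfl⟩ := (Nat.odd_mul.mp hn).2
  rcases s with _ | s
  · simp at hne
  · nlinarith

theorem eq_prime_of_classNumber_eq_one_general
    (n : ℕ) (r : ℕ)
    (d : ℕ) (hd : d = n ^ 2 + r) (hsf : Squarefree d) (h5 : d % 8 = 5)
    (p : ℕ) (hp : p.Prime) (hpodd : Odd p) (hpn : p ∣ n)
    (K : Type) [Field K] [NumberField K] (sq : K) (hsq : sq ^ 2 = (d : K))
    (hrank : Module.finrank ℚ K = 2)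
    (h1 : NumberField.classNumber K = 1) :
    (r = 4 → n = p) ∧ (r = 1 → n = 2 * p) := by
  have : IsPrincipalIdealRing (𝓞 K) := classNumber_eq_one_iff.mp h1
  have hp2 : p ≠ 2 := by rintro rfl; exact Nat.not_odd_iff_even.mpr even_two hpodd
  have hp3 : 3 ≤ p := by have := hp.two_le; omega
  have hsqZ : sq ^ 2 = ((d : ℤ) : K) := by exact_mod_cast hsq
  have hsfZ : Squarefree (d : ℤ) := Int.squarefree_natCast.mpr hsf
  have hδ := notMem_range_ratCast_of_sq_eq hsqZ <| not_isSquare_of_squarefree hsfZ <| by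
    rw [Int.isUnit_iff]; omega
  have h4p : ¬IsSquare (4 * p : ℤ) :=
    not_isSquare_four_mul (Nat.prime_iff_prime_int.mp hp).not_isSquare
  have hp2k : ∀ k : ℕ, ¬(p : ℤ) ∣ 2 ^ k := fun k h =>
    hp2 ((Nat.prime_dvd_prime_iff_eq hp Nat.prime_two).mp (hp.dvd_of_dvd_pow (by exact_mod_cast h)))
  have hsolve : ∀ c : ℤ, (d : ℤ) = n ^ 2 + c ^ 2 → ¬(p : ℤ) ∣ 2 * c →
      ∃ z w : ℤ, |z ^ 2 - (n ^ 2 + c ^ 2) * w ^ 2| = 4 * p := fun c hdc hpc =>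
    hdc ▸ exists_abs_sq_sub_mul_sq_eq_four_mul hrank hδ hsqZ hsfZ hp hpc
      (by simpa [hdc] using dvd_pow (Int.natCast_dvd_natCast.mpr hpn) two_ne_zero)
  refine ⟨fun hr4 => ?_, fun hr1 => ?_⟩
  · by_contra hne
    have hn := odd_of_sq_add_four_mod_eight (hr4 ▸ hd ▸ h5)
    have h3p := three_mul_le_of_odd_of_dvd hn hpn hne
    obtain ⟨z, w, hzw⟩ := hsolve 2 (by simp [hd, hr4]) (by simpa using hp2k 2)
    refine abs_sq_sub_mul_sq_ne two_pos h4p (by omega) (fun a b h => ?_) z w hzw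
    exact two_dvd_sub_mul_of_two_dvd ((dvd_abs 2 _).mp (by rw [h]; exact ⟨2 * p, by ring⟩))
  · by_contra hne
    obtain ⟨m, hm, rfl⟩ := exists_odd_eq_two_mul_of_sq_add_one_mod_eight (hr1 ▸ hd ▸ h5)
    have hpm : p ∣ m := (Nat.Coprime.dvd_of_dvd_mul_left
      ((Nat.coprime_primes hp Nat.prime_two).mpr hp2) hpn)
    have h3p := three_mul_le_of_odd_of_dvd hm hpm (by rintro rfl; exact hne rfl)
    obtain ⟨z, w, hzw⟩ := hsolve 1 (by simp [hd, hr1]) (by simpa using hp2k 1)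
    exact abs_sq_sub_mul_sq_ne one_pos h4p (by omega) (fun _ _ _ => one_dvd _) z w hzw

/-- Let `n` be a positive integer and `r ∈ {1, 4}` with `d = n² + r` squarefree and
`d ≡ 5 (mod 8)`, and let `p` be an odd prime dividing `n`. If the class number of `ℚ(√d)`
is `1`, then `n = p` in the case `r = 4`, and `n = 2p` in the case `r = 1`. -/
theorem eq_prime_of_classNumber_eq_one
    (n : ℕ) (hn : 0 < n) (r : ℕ) (hr : r = 1 ∨ r = 4)
    (d : ℕ) (hd : d = n ^ 2 + r) (hsf : Squarefree d) (h5 : d % 8 = 5)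
    (p : ℕ) (hp : p.Prime) (hpodd : Odd p) (hpn : p ∣ n)
    (K : Type) [Field K] [NumberField K] (sq : K) (hsq : sq ^ 2 = (d : K))
    (hrank : Module.finrank ℚ K = 2)
    (h1 : NumberField.classNumber K = 1) :
    (r = 4 → n = p) ∧ (r = 1 → n = 2 * p) :=
  eq_prime_of_classNumber_eq_one_general n r d hd hsf h5 p hp hpodd hpn K sq hsq hrank h1
end

section
/- Let n be a positive integer and r ∈ {4, −4} (with n ≥ 5 if r = −4), and suppose d = n² + r is squarefree with d > 1. Then ε = (n + √d)/2 lies in the ring of integers O of ℚ(√d) and is its fundamental unit: ε > 1, every unit of O equals ε^m or −ε^m for some integer m, and the norm N(ε) = ε·ε′ equals −sgn(r) (i.e. N(ε) = −1 if r = 4 and N(ε) = 1 if r = −4). -/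
/-!
If `a + b√d ∈ ℚ(√d)` is integral over `ℤ` and `b ≠ 0`, its minimal polynomial
`X² - 2aX + (a² - db²)` has integer coefficients; then `d(2b)²` is an integer, so `2b ∈ ℤ` because
`d` is squarefree. Hence the units are the numbers `w = (P + Q√d)/2` with `P² - dQ² = ±4`. When
`w > 1` its conjugate `±w⁻¹` lies in `(-1, 1)`, which forces `P, Q > 0`. For `d = n² ± 4`,
`Q ≥ 2` gives `w > (n + √d)/2` because `√d > n - 1`, and `Q = 1` gives `P² ∈ {n² + 8, n², n² - 8}`,
so `P ≥ n` (for `n ≥ 5` the number `n² - 8` lies strictly between `(n - 1)²` and `n²`). Thus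
`ε = (n + √d)/2` is the least unit above `1`, and dividing a positive unit by the power of `ε` just
below it leaves a unit in `[1, ε)`, which must be `1`.
-/

open Polynomial

theorem isIntegral_of_sq_sub_mul_add_eq_zero {A : Type*} [Ring A] {x : A} (P N : ℤ)
    (h : x ^ 2 - P * x + N = 0) : IsIntegral ℤ x :=
  ⟨X ^ 2 - C P * X + C N, by monicity!, by rw [← aeval_def]; simpa using h⟩

theorem Rat.exists_intCast_eq_of_isIntegral {K : Type*} [Field K] [CharZero K] {q : ℚ}
    (h : IsIntegral ℤ (q : K)) : ∃ z : ℤ, (z : ℚ) = q := by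
  rw [← eq_ratCast (algebraMap ℚ K), isIntegral_algebraMap_iff (algebraMap ℚ K).injective] at h
  exact IsIntegrallyClosed.isIntegral_iff.mp h

theorem Rat.exists_intCast_eq_of_squarefree_of_mul_sq_eq {d M : ℤ} (hd : Squarefree d) {q : ℚ}
    (h : d * q ^ 2 = M) : ∃ z : ℤ, (z : ℚ) = q := by
  have hq : d * q.num ^ 2 = q.den ^ 2 * M := by
    have : (d : ℚ) * q.num ^ 2 = q.den ^ 2 * M := by
      rw [← Rat.mul_den_eq_num, ← h]; ring
    exact_mod_cast this
  have hden : (q.den : ℤ) ^ 2 ∣ d :=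
    q.isCoprime_num_den.symm.pow.dvd_of_dvd_mul_right ⟨M, hq⟩
  have := Int.isUnit_iff.1 (hd _ (by rwa [← sq]))
  exact ⟨q.num, by rw [← Rat.den_eq_one_iff q]; omega⟩

theorem Irrational.ratCast_add_ratCast_mul_eq_zero_iff {s : ℝ} (hs : Irrational s) {a b : ℚ} :
    (a : ℝ) + b * s = 0 ↔ a = 0 ∧ b = 0 := by
  rcases eq_or_ne b 0 with rfl | hb
  · simp
  · simpa [hb] using ((hs.ratCast_mul hb).ratCast_add a).ne_zero

theorem Squarefree.irrational_sqrt_intCast {d : ℤ} (hsf : Squarefree d) (hd : 1 < d) :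
    Irrational √(d : ℝ) := by
  refine irrational_sqrt_intCast_iff.2 ⟨fun ⟨k, hk⟩ => ?_, hd.le.trans' zero_le_one⟩
  rcases Int.isUnit_iff.1 (hsf k ⟨1, by rw [hk, mul_one]⟩) with rfl | rfl <;> simp at hk <;> omega

theorem Submonoid.zpow_mem_of_inv_mem {K : Type*} [DivisionRing K] {S : Submonoid K} {x : K}
    (hx : x ∈ S) (hx' : x⁻¹ ∈ S) (m : ℤ) : x ^ m ∈ S := by
  obtain ⟨k, rfl | rfl⟩ := m.eq_nat_or_neg
  · simpa using S.pow_mem hx k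
  · simpa [inv_pow] using S.pow_mem hx' k

theorem Submonoid.exists_eq_zpow_of_forall_le {K : Type*} [Field K] [LinearOrder K]
    [IsStrictOrderedRing K] [Archimedean K] {S : Submonoid K} {ε : K} (hε : 1 < ε)
    (hεS : ε ∈ S) (hεS' : ε⁻¹ ∈ S) (hmin : ∀ w ∈ S, 1 < w → ε ≤ w) {v : K} (hv : v ∈ S)
    (hv0 : 0 < v) : ∃ m : ℤ, v = ε ^ m := by
  obtain ⟨m, hlo, hhi⟩ := exists_mem_Ico_zpow hv0 hε
  have hεm : 0 < ε ^ m := zpow_pos (by linarith) m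
  have hw : v * (ε ^ m)⁻¹ ∈ S := S.mul_mem hv (by simpa using S.zpow_mem_of_inv_mem hεS hεS' (-m))
  have hw1 : 1 ≤ v * (ε ^ m)⁻¹ := by rwa [← div_eq_mul_inv, one_le_div hεm]
  have hwε : v * (ε ^ m)⁻¹ < ε := by
    rwa [← div_eq_mul_inv, div_lt_iff₀ hεm, ← zpow_one_add₀ (by linarith), add_comm]
  obtain h | h := hw1.eq_or_lt
  · exact ⟨m, by field_simp at h; exact h.symm⟩
  · exact absurd (hmin _ hw h) hwε.not_ge

theorem Submonoid.exists_eq_zpow_or_eq_neg_zpow_of_forall_le {K : Type*} [Field K] [LinearOrder K]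
    [IsStrictOrderedRing K] [Archimedean K] {S : Submonoid K} (hneg : ∀ x ∈ S, -x ∈ S)
    {ε : K} (hε : 1 < ε) (hεS : ε ∈ S) (hεS' : ε⁻¹ ∈ S) (hmin : ∀ w ∈ S, 1 < w → ε ≤ w)
    {v : K} (hv : v ∈ S) (hv0 : v ≠ 0) : ∃ m : ℤ, v = ε ^ m ∨ v = -ε ^ m := by
  rcases hv0.lt_or_gt with hv0 | hv0
  · obtain ⟨m, hm⟩ := exists_eq_zpow_of_forall_le hε hεS hεS' hmin (hneg v hv) (neg_pos.2 hv0)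
    exact ⟨m, .inr (by rw [← hm, neg_neg])⟩
  · exact (exists_eq_zpow_of_forall_le hε hεS hεS' hmin hv hv0).imp fun _ => .inl

theorem natCast_le_of_sq_sub_sq_add_eq (n : ℕ) {r : ℤ} (hr : r = 4 ∨ r = -4)
    (hn5 : r = -4 → 5 ≤ n) {P σ : ℤ} (hσ : IsUnit σ) (hP : 0 < P)
    (h : P ^ 2 - (n ^ 2 + r) = 4 * σ) : n ≤ P := by
  by_contra! hlt
  have hlt' : P ≤ n - 1 := by omega
  have : P ^ 2 ≤ (n - 1 : ℤ) ^ 2 := by nlinarith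
  rcases Int.isUnit_iff.1 hσ with rfl | rfl <;> rcases hr with rfl | rfl
  all_goals first | nlinarith | have := hn5 rfl; nlinarith

section

variable {d : ℤ} {s : ℝ}

theorem minpoly_ratCast_add_ratCast_mul (hs : s ^ 2 = d) (hirr : Irrational s) {a b : ℚ}
    (hb : b ≠ 0) :
    minpoly ℚ ((a : ℝ) + b * s) = X ^ 2 - C (2 * a) * X + C (a ^ 2 - d * b ^ 2) := by
  have hmonic : (X ^ 2 - C (2 * a) * X + C (a ^ 2 - d * b ^ 2)).Monic := by monicity!
  have hdeg : (X ^ 2 - C (2 * a) * X + C (a ^ 2 - d * b ^ 2)).natDegree ≤ 2 := by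
    compute_degree!
  have hroot : aeval ((a : ℝ) + b * s) (X ^ 2 - C (2 * a) * X + C (a ^ 2 - d * b ^ 2)) = 0 := by
    simp only [map_add, map_sub, map_mul, map_pow, aeval_X, aeval_C, eq_ratCast]
    push_cast
    linear_combination (b : ℝ) ^ 2 * hs
  have hint : IsIntegral ℚ ((a : ℝ) + b * s) := ⟨_, hmonic, hroot⟩
  have hnotMem : (a : ℝ) + b * s ∉ (algebraMap ℚ ℝ).range := by
    rintro ⟨q, hq⟩
    have := hirr.ratCast_add_ratCast_mul_eq_zero_iff (a := a - q) (b := b)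
    simp_all
  refine (eq_of_monic_of_dvd_of_natDegree_le (minpoly.monic hint) hmonic
    (minpoly.dvd ℚ _ hroot) ?_).symm
  exact hdeg.trans ((minpoly.two_le_natDegree_iff hint).2 hnotMem)

theorem exists_intCast_of_isIntegral_ratCast_add_ratCast_mul (hsf : Squarefree d)
    (hs : s ^ 2 = d) (hirr : Irrational s) {a b : ℚ} (h : IsIntegral ℤ ((a : ℝ) + b * s)) :
    ∃ P Q N : ℤ, (P : ℚ) = 2 * a ∧ (Q : ℚ) = 2 * b ∧ (N : ℚ) = a ^ 2 - d * b ^ 2 := by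
  rcases eq_or_ne b 0 with rfl | hb
  · obtain ⟨z, rfl⟩ := Rat.exists_intCast_eq_of_isIntegral (K := ℝ) (by simpa using h)
    exact ⟨2 * z, 0, z ^ 2, by push_cast; ring, by simp, by push_cast; ring⟩
  have hcoeff (k : ℕ) : ∃ z : ℤ, (z : ℚ) = (minpoly ℚ ((a : ℝ) + b * s)).coeff k :=
    ⟨(minpoly ℤ _).coeff k, by
      rw [minpoly.isIntegrallyClosed_eq_field_fractions' ℚ h, coeff_map, eq_intCast]⟩
  simp only [minpoly_ratCast_add_ratCast_mul hs hirr hb] at hcoeff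
  obtain ⟨P, hP⟩ := hcoeff 1
  obtain ⟨N, hN⟩ := hcoeff 0
  simp only [coeff_add, coeff_sub, coeff_C_mul, coeff_X_pow, coeff_X, coeff_C] at hP hN
  norm_num at hP hN
  obtain ⟨Q, hQ⟩ := Rat.exists_intCast_eq_of_squarefree_of_mul_sq_eq hsf (q := 2 * b)
    (M := P ^ 2 - 4 * N) (by push_cast; rw [hP, hN]; ring)
  exact ⟨-P, Q, N, by push_cast; rw [hP]; ring, hQ, hN⟩

theorem mem_adjoin_singleton_iff_of_sq_eq (hs : s ^ 2 = d) {u : ℝ} :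
    u ∈ Algebra.adjoin ℚ {s} ↔ ∃ a b : ℚ, u = a + b * s := by
  constructor
  · intro hu
    induction hu using Algebra.adjoin_induction with
    | mem x hx => exact ⟨0, 1, by simp_all⟩
    | algebraMap q => exact ⟨q, 0, by simp⟩
    | add x y _ _ hx hy =>
      obtain ⟨⟨a, b, rfl⟩, ⟨c, e, rfl⟩⟩ := And.intro hx hy
      exact ⟨a + c, b + e, by push_cast; ring⟩
    | mul x y _ _ hx hy =>
      obtain ⟨⟨a, b, rfl⟩, ⟨c, e, rfl⟩⟩ := And.intro hx hy
      exact ⟨a * c + d * b * e, a * e + b * c, by push_cast; linear_combination (b : ℝ) * e * hs⟩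
  · rintro ⟨a, b, rfl⟩
    exact add_mem (by simpa using algebraMap_mem (Algebra.adjoin ℚ {s}) a)
      (mul_mem (by simpa using algebraMap_mem (Algebra.adjoin ℚ {s}) b)
        (Algebra.self_mem_adjoin_singleton ℚ s))

-- Contains `0` (as `0⁻¹ = 0`); its nonzero elements are the units of the integers of `ℚ(s)`.
def quadraticUnits (s : ℝ) : Submonoid ℝ where
  carrier := {u | u ∈ Algebra.adjoin ℚ {s} ∧ IsIntegral ℤ u ∧ IsIntegral ℤ u⁻¹}
  one_mem' := ⟨one_mem _, isIntegral_one, by simpa using isIntegral_one⟩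
  mul_mem' := fun ⟨hx, hxi, hxi'⟩ ⟨hy, hyi, hyi'⟩ =>
    ⟨mul_mem hx hy, hxi.mul hyi, by rw [mul_inv]; exact hxi'.mul hyi'⟩

theorem neg_mem_quadraticUnits {u : ℝ} (hu : u ∈ quadraticUnits s) : -u ∈ quadraticUnits s :=
  ⟨neg_mem hu.1, hu.2.1.neg, by rw [inv_neg]; exact hu.2.2.neg⟩

theorem isIntegral_half_add_mul (hs : s ^ 2 = d) {P Q N : ℤ} (h : P ^ 2 - d * Q ^ 2 = 4 * N) :
    IsIntegral ℤ (((P : ℝ) + Q * s) / 2) := by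
  have hR : (P : ℝ) ^ 2 - d * Q ^ 2 = 4 * N := by exact_mod_cast h
  exact isIntegral_of_sq_sub_mul_add_eq_zero P N (by linear_combination (Q ^ 2 * hs - hR) / 4)

theorem inv_half_add_mul (hs : s ^ 2 = d) {P Q σ : ℤ} (hσ : IsUnit σ)
    (h : P ^ 2 - d * Q ^ 2 = 4 * σ) :
    (((P : ℝ) + Q * s) / 2)⁻¹ = (((σ * P : ℤ) : ℝ) + (-σ * Q : ℤ) * s) / 2 := by
  have hR : (P : ℝ) ^ 2 - d * Q ^ 2 = 4 * σ := by exact_mod_cast h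
  have hσ2 : (σ : ℝ) * σ = 1 := by exact_mod_cast Int.isUnit_mul_self hσ
  refine inv_eq_of_mul_eq_one_right ?_
  push_cast
  linear_combination (σ * hR - σ * Q ^ 2 * hs) / 4 + hσ2

theorem half_add_mul_mem_quadraticUnits (hs : s ^ 2 = d) {P Q σ : ℤ} (hσ : IsUnit σ)
    (h : P ^ 2 - d * Q ^ 2 = 4 * σ) : ((P : ℝ) + Q * s) / 2 ∈ quadraticUnits s := by
  refine ⟨(mem_adjoin_singleton_iff_of_sq_eq hs).2 ⟨P / 2, Q / 2, by push_cast; ring⟩,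
    isIntegral_half_add_mul hs h, ?_⟩
  rw [inv_half_add_mul hs hσ h]
  exact isIntegral_half_add_mul hs (N := σ) (by
    linear_combination σ ^ 2 * h + 4 * σ * Int.isUnit_mul_self hσ)

theorem inv_half_add_mul_mem_quadraticUnits (hs : s ^ 2 = d) {P Q σ : ℤ} (hσ : IsUnit σ)
    (h : P ^ 2 - d * Q ^ 2 = 4 * σ) : (((P : ℝ) + Q * s) / 2)⁻¹ ∈ quadraticUnits s := by
  rw [inv_half_add_mul hs hσ h]
  exact half_add_mul_mem_quadraticUnits hs hσ (by
    linear_combination σ ^ 2 * h + 4 * σ * Int.isUnit_mul_self hσ)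

theorem exists_half_add_mul_of_mem_quadraticUnits (hsf : Squarefree d) (hs : s ^ 2 = d)
    (hirr : Irrational s) {u : ℝ} (hu : u ∈ quadraticUnits s) (hu0 : u ≠ 0) :
    ∃ P Q σ : ℤ, IsUnit σ ∧ P ^ 2 - d * Q ^ 2 = 4 * σ ∧ u = ((P : ℝ) + Q * s) / 2 := by
  obtain ⟨hmem, hint, hinv⟩ := hu
  obtain ⟨a, b, rfl⟩ := (mem_adjoin_singleton_iff_of_sq_eq hs).1 hmem
  obtain ⟨P, Q, N, hP, hQ, hN⟩ :=
    exists_intCast_of_isIntegral_ratCast_add_ratCast_mul hsf hs hirr hint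
  have hconj : ((a : ℝ) + b * s) * (a + (-b : ℚ) * s) = N := by
    rw [show (N : ℝ) = ((N : ℚ) : ℝ) by norm_cast, hN]
    push_cast
    linear_combination (-(b : ℝ) ^ 2) * hs
  have hN0 : (N : ℝ) ≠ 0 := by
    rw [← hconj]
    refine mul_ne_zero hu0 fun h => hu0 ?_
    obtain ⟨rfl, hb⟩ := hirr.ratCast_add_ratCast_mul_eq_zero_iff.1 h
    simp [neg_eq_zero.1 hb]
  have hinv_eq : ((a : ℝ) + b * s)⁻¹ = ((a / N : ℚ) : ℝ) + ((-b / N : ℚ) : ℝ) * s := by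
    refine inv_eq_of_mul_eq_one_right ?_
    push_cast at hconj ⊢
    field_simp
    linear_combination hconj
  rw [hinv_eq] at hinv
  obtain ⟨-, -, N', -, -, hN'⟩ :=
    exists_intCast_of_isIntegral_ratCast_add_ratCast_mul hsf hs hirr hinv
  have hNN' : N * N' = 1 := by
    have hN0' : (N : ℚ) ≠ 0 := by exact_mod_cast hN0
    have : (N : ℚ) * N' = 1 := by
      rw [hN']; field_simp; rw [hN]
    exact_mod_cast this
  refine ⟨P, Q, N, IsUnit.of_mul_eq_one _ hNN', ?_, ?_⟩
  · have : (P : ℚ) ^ 2 - d * Q ^ 2 = 4 * N := by rw [hP, hQ, hN]; ring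
    exact_mod_cast this
  · have hP' : (P : ℝ) = 2 * a := by exact_mod_cast hP
    have hQ' : (Q : ℝ) = 2 * b := by exact_mod_cast hQ
    rw [hP', hQ']; ring

theorem pos_of_one_lt_half_add_mul (hs : s ^ 2 = d) (hs0 : 0 ≤ s) {P Q σ : ℤ} (hσ : IsUnit σ)
    (h : P ^ 2 - d * Q ^ 2 = 4 * σ) (hw : 1 < ((P : ℝ) + Q * s) / 2) : 0 < P ∧ 0 < Q := by
  have hR : (P : ℝ) ^ 2 - d * Q ^ 2 = 4 * σ := by exact_mod_cast h
  have habs : |((P : ℝ) + Q * s) / 2| * |((P : ℝ) - Q * s) / 2| = 1 := by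
    rw [← abs_mul, show ((P : ℝ) + Q * s) / 2 * ((P - Q * s) / 2) = σ by
      linear_combination (hR - Q ^ 2 * hs) / 4]
    rcases Int.isUnit_iff.1 hσ with rfl | rfl <;> simp
  -- the conjugate `(P - Q s) / 2` has absolute value `1 / w < 1`
  obtain ⟨hlo, hhi⟩ := abs_lt.1 (show |((P : ℝ) - Q * s) / 2| < 1 by
    rw [abs_of_pos (by linarith : (0 : ℝ) < (P + Q * s) / 2)] at habs
    nlinarith [abs_nonneg (((P : ℝ) - Q * s) / 2)])
  exact ⟨by exact_mod_cast (by linarith : (0 : ℝ) < P),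
    by exact_mod_cast pos_of_mul_pos_left (by linarith : (0 : ℝ) < Q * s) hs0⟩

theorem natCast_add_le_add_mul (n : ℕ) {r : ℤ} (hr : r = 4 ∨ r = -4) (hn5 : r = -4 → 5 ≤ n)
    (hd : d = n ^ 2 + r) (hs : s ^ 2 = d) (hs0 : 0 ≤ s) {P Q σ : ℤ} (hσ : IsUnit σ)
    (h : P ^ 2 - d * Q ^ 2 = 4 * σ) (hP : 0 < P) (hQ : 0 < Q) : n + s ≤ P + Q * s := by
  obtain rfl | hQ2 := (show Q = 1 ∨ 2 ≤ Q by omega)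
  · have := natCast_le_of_sq_sub_sq_add_eq n hr hn5 hσ hP (by simpa [hd] using h)
    have : (n : ℝ) ≤ P := by exact_mod_cast this
    push_cast; linarith
  · have hsq : ((n : ℝ) - 1) ^ 2 < s ^ 2 := by
      rw [hs, hd]; push_cast
      rcases hr with rfl | rfl
      · push_cast; nlinarith [(Nat.cast_nonneg n : (0 : ℝ) ≤ n)]
      · have : (5 : ℝ) ≤ n := by exact_mod_cast hn5 rfl
        push_cast; nlinarith
    have hsn : (n : ℝ) - 1 < s := lt_of_pow_lt_pow_left₀ 2 hs0 hsq
    have hP' : (1 : ℝ) ≤ P := by exact_mod_cast hP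
    have hQ' : (2 : ℝ) ≤ Q := by exact_mod_cast hQ2
    nlinarith

theorem add_div_two_le_of_mem_quadraticUnits (n : ℕ) {r : ℤ} (hr : r = 4 ∨ r = -4)
    (hn5 : r = -4 → 5 ≤ n) (hd : d = n ^ 2 + r) (hsf : Squarefree d) (hs : s ^ 2 = d)
    (hs0 : 0 ≤ s) (hirr : Irrational s) {w : ℝ} (hw : w ∈ quadraticUnits s) (hw1 : 1 < w) :
    ((n : ℝ) + s) / 2 ≤ w := by
  obtain ⟨P, Q, σ, hσ, h, rfl⟩ :=
    exists_half_add_mul_of_mem_quadraticUnits hsf hs hirr hw (by positivity)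
  obtain ⟨hP, hQ⟩ := pos_of_one_lt_half_add_mul hs hs0 hσ h hw1
  linarith [natCast_add_le_add_mul n hr hn5 hd hs hs0 hσ h hP hQ]

end

/-- Degert's theorem, case `|r| = 4`: for `d = n² + r` squarefree with `r = ±4` (and `n ≥ 5`
when `r = −4`), the real number `ε = (n + √d)/2` is the fundamental unit of `ℚ(√d)`: it is an
algebraic integer, a unit of the ring of integers (its inverse is also integral), `ε > 1`,
every unit `u` of the ring of integers of `ℚ(√d)` equals `±ε^m` for some `m : ℤ`, and its
norm `ε·ε′` equals `−sgn r`. -/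
theorem fundamentalUnit_abs_r_eq_four
    (n : ℕ) (hn : 0 < n) (r : ℤ) (hr : r = 4 ∨ r = -4) (hn5 : r = -4 → 5 ≤ n)
    (d : ℤ) (hd : d = (n : ℤ) ^ 2 + r) (hd1 : 1 < d) (hsf : Squarefree d) :
    IsIntegral ℤ (((n : ℝ) + Real.sqrt d) / 2) ∧
    IsIntegral ℤ (((n : ℝ) + Real.sqrt d) / 2)⁻¹ ∧
    1 < ((n : ℝ) + Real.sqrt d) / 2 ∧
    (∀ u : ℝ, (∃ a b : ℚ, u = a + b * Real.sqrt d) → u ≠ 0 →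
      IsIntegral ℤ u → IsIntegral ℤ u⁻¹ →
      ∃ m : ℤ, u = (((n : ℝ) + Real.sqrt d) / 2) ^ m ∨
        u = -(((n : ℝ) + Real.sqrt d) / 2) ^ m) ∧
    (((n : ℝ) + Real.sqrt d) / 2) * (((n : ℝ) - Real.sqrt d) / 2) = -((r.sign : ℤ) : ℝ) := by
  have hs : √(d : ℝ) ^ 2 = d := Real.sq_sqrt (by exact_mod_cast (by omega : 0 ≤ d))
  have hs1 : 1 < √(d : ℝ) := Real.lt_sqrt_of_sq_lt (by exact_mod_cast (by omega : 1 ^ 2 < d))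
  have hσ : IsUnit (-r.sign) := by
    rcases hr with rfl | rfl <;> exact Int.isUnit_iff.2 (by decide)
  have hnorm : (n : ℤ) ^ 2 - d * 1 ^ 2 = 4 * -r.sign := by rcases hr with rfl | rfl <;> simp [hd]
  have hε : ((n : ℝ) + √d) / 2 = (((n : ℤ) : ℝ) + ((1 : ℤ) : ℝ) * √d) / 2 := by push_cast; ring
  obtain ⟨hεU, hεU'⟩ : ((n : ℝ) + √d) / 2 ∈ quadraticUnits √d ∧
      (((n : ℝ) + √d) / 2)⁻¹ ∈ quadraticUnits √d := by
    rw [hε]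
    exact ⟨half_add_mul_mem_quadraticUnits hs hσ hnorm,
      inv_half_add_mul_mem_quadraticUnits hs hσ hnorm⟩
  have hε1 : 1 < ((n : ℝ) + √d) / 2 := by
    have : (1 : ℝ) ≤ n := by exact_mod_cast hn
    linarith
  refine ⟨hεU.2.1, hεU.2.2, hε1, fun u hu hu0 hint hinv => ?_, ?_⟩
  · exact Submonoid.exists_eq_zpow_or_eq_neg_zpow_of_forall_le (fun _ => neg_mem_quadraticUnits)
      hε1 hεU hεU' (fun w hw hw1 => add_div_two_le_of_mem_quadraticUnits n hr hn5 hd hsf hs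
        (by positivity) (hsf.irrational_sqrt_intCast hd1) hw hw1)
      ⟨(mem_adjoin_singleton_iff_of_sq_eq hs).2 hu, hint, hinv⟩ hu0
  · have : ((n : ℝ) ^ 2 - d) = 4 * -r.sign := by exact_mod_cast (by simpa using hnorm)
    linear_combination (this - hs) / 4
end

section
/- Let n be a positive integer and r a nonzero integer with r dividing 4n, −n < r ≤ n, and |r| ∉ {1, 4}, and suppose d = n² + r is squarefree with d > 1. Then ε = (2n² + r)/|r| + (2n/|r|)·√d lies in the ring of integers O of ℚ(√d) and is its fundamental unit: ε > 1, every unit of O equals ε^m or −ε^m for some integer m, and the norm N(ε) = ε·ε′ equals 1. -/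
/-!
A unit of the ring of integers of `ℚ(√d)` is `(x + y√d)/2` with `x² - dy² = ±4`: its trace and
norm are integers, the norm of its inverse too, and `d` squarefree makes `y` integral.
The given `ε` is such a unit with `(X, Y) = ((4n² + 2r)/|r|, 4n/|r|)` and `X² - dY² = 4`.
A unit strictly between `1` and `ε` would have `1 ≤ x` and `1 ≤ y < Y`, i.e. `|r|(y + 1) ≤ 4n`;
writing `x = ny + t`, the equation reads `t(2ny + t) - ry² = ±4`, which fails by size when
`|t| ≥ 2`, because `|r| ∉ {1, 4}` when `t = 0`, and by a coprimality argument when `t = ±1`.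
Since the units form a subgroup of `ℝˣ` with no element in `(1, ε)`, they are the `±εᵐ`.
-/

open Polynomial

lemma sqrt_intCast_sq (d : ℤ) : √(d : ℝ) ^ 2 = max (d : ℝ) 0 := by
  rcases le_total 0 (d : ℝ) with hd | hd
  · rw [max_eq_left hd, Real.sq_sqrt hd]
  · rw [max_eq_right hd, Real.sqrt_eq_zero_of_nonpos hd, sq, mul_zero]

lemma inv_ratCast_add_mul_sqrt {d : ℤ} (hd : Irrational √(d : ℝ)) (a b : ℚ) :
    ((a : ℝ) + b * √d)⁻¹ =
      ((a / (a ^ 2 - d * b ^ 2) : ℚ) : ℝ) + ((-b / (a ^ 2 - d * b ^ 2) : ℚ) : ℝ) * √d := by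
  obtain ⟨hsq, hd0⟩ := irrational_sqrt_intCast_iff.mp hd
  have hs : √(d : ℝ) ^ 2 = d := Real.sq_sqrt (by exact_mod_cast hd0)
  rcases eq_or_ne b 0 with rfl | hb
  · rcases eq_or_ne a 0 with rfl | ha
    · simp
    · simp
      field_simp
  have hN : a ^ 2 - d * b ^ 2 ≠ 0 := fun h ↦
    hsq (Rat.isSquare_intCast_iff.mp ⟨a / b, by field_simp; linarith⟩)
  have hNℝ : (a : ℝ) ^ 2 - d * b ^ 2 ≠ 0 := by exact_mod_cast hN
  refine inv_eq_of_mul_eq_one_right ?_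
  calc _ = ((a : ℝ) ^ 2 - √d ^ 2 * b ^ 2) / ((a : ℝ) ^ 2 - d * b ^ 2) := by push_cast; ring
    _ = 1 := by rw [hs, div_self hNℝ]

/-- For `d < 0` this is just `ℚ`, since then `√d = 0`. -/
def ratAdjoinSqrt (d : ℤ) : Subfield ℝ where
  carrier := {x | ∃ a b : ℚ, x = a + b * √d}
  zero_mem' := ⟨0, 0, by simp⟩
  one_mem' := ⟨1, 0, by simp⟩
  add_mem' := by
    rintro _ _ ⟨a, b, rfl⟩ ⟨a', b', rfl⟩
    exact ⟨a + a', b + b', by push_cast; ring⟩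
  neg_mem' := by
    rintro _ ⟨a, b, rfl⟩
    exact ⟨-a, -b, by push_cast; ring⟩
  mul_mem' := by
    rintro _ _ ⟨a, b, rfl⟩ ⟨a', b', rfl⟩
    refine ⟨a * a' + b * b' * max (d : ℚ) 0, a * b' + a' * b, ?_⟩
    push_cast
    linear_combination (b : ℝ) * b' * sqrt_intCast_sq d
  inv_mem' := by
    rintro _ ⟨a, b, rfl⟩
    by_cases hd : Irrational √(d : ℝ)
    · exact ⟨_, _, inv_ratCast_add_mul_sqrt hd a b⟩
    · obtain ⟨q, hq⟩ := not_not.mp hd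
      exact ⟨(a + b * q)⁻¹, 0, by rw [← hq]; push_cast; ring⟩

def integralUnits {F : Type*} [Field F] (K : Subfield F) : Subgroup Fˣ where
  carrier := {u | (u : F) ∈ K ∧ IsIntegral ℤ (u : F) ∧ IsIntegral ℤ (u : F)⁻¹}
  one_mem' := ⟨K.one_mem, isIntegral_one, by simpa using isIntegral_one⟩
  mul_mem' := fun ⟨hu, hu₁, hu₂⟩ ⟨hv, hv₁, hv₂⟩ ↦
    ⟨K.mul_mem hu hv, hu₁.mul hv₁, by rw [Units.val_mul, mul_inv]; exact hu₂.mul hv₂⟩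
  inv_mem' := fun ⟨hu, hu₁, hu₂⟩ ↦
    ⟨by rw [Units.val_inv_eq_inv_val]; exact K.inv_mem hu, by rwa [Units.val_inv_eq_inv_val],
      by rwa [Units.val_inv_eq_inv_val, inv_inv]⟩

lemma isIntegral_of_sq_add_mul_add_eq_zero {A : Type*} [CommRing A] {w : A} (b c : ℤ)
    (h : w ^ 2 + b * w + c = 0) : IsIntegral ℤ w :=
  ⟨X ^ 2 + C b * X + C c, by monicity!, by
    simp only [eval₂_add, eval₂_mul, eval₂_pow, eval₂_X, eval₂_C]
    simpa using h⟩

lemma exists_intCast_eq_of_isIntegral_of_sq_add_mul_add_eq_zero {w : ℝ} (hw : IsIntegral ℤ w)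
    (hirr : Irrational w) {p q : ℚ} (h : w ^ 2 + p * w + q = 0) :
    (∃ m : ℤ, (m : ℚ) = p) ∧ ∃ m : ℤ, (m : ℚ) = q := by
  have hwℚ : IsIntegral ℚ w := hw.tower_top
  have hP : (X ^ 2 + C p * X + C q : ℚ[X]).Monic := by monicity!
  have hdeg : (X ^ 2 + C p * X + C q : ℚ[X]).natDegree = 2 := by compute_degree!
  have hroot : aeval w (X ^ 2 + C p * X + C q : ℚ[X]) = 0 := by simpa using h
  have hminpoly : minpoly ℚ w = X ^ 2 + C p * X + C q := by
    refine (eq_of_monic_of_dvd_of_natDegree_le (minpoly.monic hwℚ) hP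
      (minpoly.dvd ℚ w hroot) ?_).symm
    rw [hdeg, minpoly.two_le_natDegree_iff hwℚ]
    rintro ⟨r, rfl⟩
    exact hirr ⟨r, rfl⟩
  have hℤ := (minpoly.isIntegrallyClosed_eq_field_fractions' ℚ hw).symm.trans hminpoly
  exact ⟨⟨(minpoly ℤ w).coeff 1, by simpa using congrArg (coeff · 1) hℤ⟩,
    ⟨(minpoly ℤ w).coeff 0, by simpa using congrArg (coeff · 0) hℤ⟩⟩

lemma exists_intCast_eq_trace_and_norm_of_isIntegral {d : ℤ} (hd : Irrational √(d : ℝ))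
    {a b : ℚ} (h : IsIntegral ℤ ((a : ℝ) + b * √d)) :
    (∃ t : ℤ, (t : ℚ) = 2 * a) ∧ ∃ N : ℤ, (N : ℚ) = a ^ 2 - d * b ^ 2 := by
  rcases eq_or_ne b 0 with rfl | hb
  · have ha : IsIntegral ℤ a := by
      rw [← isIntegral_algebraMap_iff (algebraMap ℚ ℝ).injective]
      simpa using h
    obtain ⟨z, rfl⟩ := IsIntegrallyClosed.isIntegral_iff.mp ha
    exact ⟨⟨2 * z, by simp⟩, ⟨z ^ 2, by simp⟩⟩
  have hs : √(d : ℝ) ^ 2 = d :=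
    Real.sq_sqrt (by exact_mod_cast (irrational_sqrt_intCast_iff.mp hd).2)
  obtain ⟨⟨t, ht⟩, ⟨N, hN⟩⟩ := exists_intCast_eq_of_isIntegral_of_sq_add_mul_add_eq_zero h
    ((hd.ratCast_mul hb).ratCast_add a) (p := -(2 * a)) (q := a ^ 2 - d * b ^ 2)
    (by push_cast; linear_combination (b : ℝ) ^ 2 * hs)
  exact ⟨⟨-t, by push_cast [ht]; ring⟩, ⟨N, hN⟩⟩

lemma Squarefree.exists_intCast_eq_of_mul_sq_eq {d : ℤ} (hd : Squarefree d) {q : ℚ} {z : ℤ}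
    (h : d * q ^ 2 = z) : ∃ m : ℤ, (m : ℚ) = q := by
  have hden : (q.den : ℤ) ^ 2 ∣ d * q.num ^ 2 := by
    refine ⟨z, ?_⟩
    have hq : (q.num : ℚ) = q * q.den := (Rat.mul_den_eq_num q).symm
    exact_mod_cast (by rw [hq, ← h]; ring : (d : ℚ) * q.num ^ 2 = q.den ^ 2 * z)
  have hcop : IsCoprime ((q.den : ℤ) ^ 2) (q.num ^ 2) :=
    q.isCoprime_num_den.symm.pow
  have hunit : IsUnit (q.den : ℤ) := hd _ (by simpa [sq] using hcop.dvd_of_dvd_mul_right hden)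
  have h1 : q.den = 1 := by simpa using Int.isUnit_iff.mp hunit
  exact ⟨q.num, by simpa [h1] using (Rat.num_div_den q)⟩

lemma Squarefree.not_isSquare {d : ℤ} (hsf : Squarefree d) (hd : d ≠ 1) : ¬IsSquare d := by
  rintro ⟨k, rfl⟩
  rcases Int.isUnit_iff.mp (hsf k dvd_rfl) with rfl | rfl <;> simp at hd

lemma exists_half_add_mul_sqrt_of_mem_integralUnits {d : ℤ} (hsf : Squarefree d) (hd : 1 < d)
    {u : ℝˣ} (hu : u ∈ integralUnits (ratAdjoinSqrt d)) :
    ∃ x y : ℤ, (u : ℝ) = (x + y * √d) / 2 ∧ |x ^ 2 - d * y ^ 2| = 4 := by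
  obtain ⟨⟨a, b, hab⟩, hint, hinv⟩ := hu
  have hirr : Irrational √(d : ℝ) :=
    irrational_sqrt_intCast_iff.mpr ⟨hsf.not_isSquare hd.ne', hd.le.trans' zero_le_one⟩
  obtain ⟨⟨t, ht⟩, ⟨N, hN⟩⟩ := exists_intCast_eq_trace_and_norm_of_isIntegral hirr (hab ▸ hint)
  rw [hab, inv_ratCast_add_mul_sqrt hirr] at hinv
  obtain ⟨-, ⟨N', hN'⟩⟩ := exists_intCast_eq_trace_and_norm_of_isIntegral hirr hinv
  have hN0 : a ^ 2 - d * b ^ 2 ≠ 0 := by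
    intro h0
    have := inv_ne_zero u.ne_zero
    rw [hab, inv_ratCast_add_mul_sqrt hirr, h0] at this
    simp at this
  have hNN' : N * N' = 1 := by
    have : (N : ℚ) * N' = 1 := by rw [hN', hN]; field_simp
    exact_mod_cast this
  obtain ⟨y, hy⟩ := hsf.exists_intCast_eq_of_mul_sq_eq (q := 2 * b) (z := t ^ 2 - 4 * N)
    (by push_cast [ht, hN]; ring)
  have hxy : t ^ 2 - d * y ^ 2 = 4 * N := by
    have : ((t ^ 2 - d * y ^ 2 : ℤ) : ℚ) = 4 * N := by push_cast [ht, hy, hN]; ring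
    exact_mod_cast this
  refine ⟨t, y, ?_, ?_⟩
  · have ht' : (t : ℝ) = 2 * a := by exact_mod_cast ht
    have hy' : (y : ℝ) = 2 * b := by exact_mod_cast hy
    rw [hab, ht', hy']
    ring
  · rcases Int.eq_one_or_neg_one_of_mul_eq_one hNN' with h | h <;> simp [hxy, h]

lemma mem_integralUnits_of_half_add_mul_sqrt {d : ℤ} (hd : 0 ≤ d) {u : ℝˣ} {x y : ℤ}
    (hu : (u : ℝ) = (x + y * √d) / 2) (hxy : |x ^ 2 - d * y ^ 2| = 4) :
    u ∈ integralUnits (ratAdjoinSqrt d) := by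
  have hs : √(d : ℝ) ^ 2 = d := Real.sq_sqrt (by exact_mod_cast hd)
  obtain ⟨k, hk, hk2⟩ : ∃ k : ℤ, x ^ 2 - d * y ^ 2 = 4 * k ∧ k ^ 2 = 1 := by
    rcases (abs_eq (by norm_num)).mp hxy with h | h
    exacts [⟨1, by simp [h]⟩, ⟨-1, by simp [h]⟩]
  have hkℝ : (x : ℝ) ^ 2 - d * y ^ 2 = 4 * k := by exact_mod_cast hk
  have hk2ℝ : (k : ℝ) ^ 2 = 1 := by exact_mod_cast hk2
  have hinv : (u : ℝ)⁻¹ = k * ((x - y * √d) / 2) := by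
    refine inv_eq_of_mul_eq_one_right ?_
    rw [hu]
    linear_combination (k / 4 : ℝ) * hkℝ - (k * y ^ 2 / 4 : ℝ) * hs + hk2ℝ
  refine ⟨⟨x / 2, y / 2, by rw [hu]; push_cast; ring⟩,
    isIntegral_of_sq_add_mul_add_eq_zero (-x) k ?_,
    isIntegral_of_sq_add_mul_add_eq_zero (-(k * x)) k ?_⟩
  · rw [hu]; push_cast
    linear_combination (-1 / 4 : ℝ) * hkℝ + (y ^ 2 / 4 : ℝ) * hs
  · rw [hinv]; push_cast
    linear_combination (-k ^ 2 / 4 : ℝ) * hkℝ + (k ^ 2 * y ^ 2 / 4 : ℝ) * hs - (k : ℝ) * hk2ℝ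

theorem mem_integralUnits_ratAdjoinSqrt_iff {d : ℤ} (hsf : Squarefree d) (hd : 1 < d) {u : ℝˣ} :
    u ∈ integralUnits (ratAdjoinSqrt d) ↔
      ∃ x y : ℤ, (u : ℝ) = (x + y * √d) / 2 ∧ |x ^ 2 - d * y ^ 2| = 4 :=
  ⟨exists_half_add_mul_sqrt_of_mem_integralUnits hsf hd,
    fun ⟨_, _, hu, hxy⟩ ↦ mem_integralUnits_of_half_add_mul_sqrt (by omega) hu hxy⟩

lemma neg_one_mem_integralUnits {F : Type*} [Field F] (K : Subfield F) :
    -1 ∈ integralUnits K :=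
  ⟨by simp, by simpa using isIntegral_one.neg, by simpa using isIntegral_one.neg⟩

lemma Subgroup.exists_eq_zpow_of_pos {G : Subgroup ℝˣ} {ε : ℝˣ} (hε : ε ∈ G) (h1 : 1 < (ε : ℝ))
    (hmin : ∀ g ∈ G, (g : ℝ) ∉ Set.Ioo 1 (ε : ℝ)) {u : ℝˣ} (hu : u ∈ G) (hpos : 0 < (u : ℝ)) :
    ∃ m : ℤ, (u : ℝ) = ε ^ m := by
  obtain ⟨m, hm₁, hm₂⟩ := exists_mem_Ico_zpow hpos h1
  have hεm : 0 < (ε : ℝ) ^ m := zpow_pos (zero_lt_one.trans h1) m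
  have hg : ((u * ε ^ (-m) : ℝˣ) : ℝ) = u / ε ^ m := by
    rw [Units.val_mul, Units.val_zpow_eq_zpow_val, zpow_neg, div_eq_mul_inv]
  have hle : 1 ≤ (u : ℝ) / ε ^ m := (one_le_div hεm).mpr hm₁
  have hlt : (u : ℝ) / ε ^ m < ε := by
    rwa [div_lt_iff₀ hεm, ← zpow_one_add₀ (zero_lt_one.trans h1).ne', add_comm]
  have hq : (u : ℝ) / ε ^ m = 1 := by
    by_contra hne
    refine hmin _ (G.mul_mem hu (G.zpow_mem hε (-m))) ?_
    rw [hg]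
    exact ⟨hle.lt_of_ne' hne, hlt⟩
  exact ⟨m, (div_eq_one_iff_eq hεm.ne').mp hq⟩

theorem Subgroup.exists_eq_zpow_or_eq_neg_zpow {G : Subgroup ℝˣ} (hneg : -1 ∈ G) {ε : ℝˣ}
    (hε : ε ∈ G) (h1 : 1 < (ε : ℝ)) (hmin : ∀ g ∈ G, (g : ℝ) ∉ Set.Ioo 1 (ε : ℝ)) {u : ℝˣ}
    (hu : u ∈ G) : ∃ m : ℤ, (u : ℝ) = ε ^ m ∨ (u : ℝ) = -ε ^ m := by
  rcases u.ne_zero.lt_or_gt with hneg_u | hpos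
  · obtain ⟨m, hm⟩ := exists_eq_zpow_of_pos hε h1 hmin (G.mul_mem hneg hu) (by simp [hneg_u])
    exact ⟨m, Or.inr (by simpa [neg_eq_iff_eq_neg] using hm)⟩
  · obtain ⟨m, hm⟩ := exists_eq_zpow_of_pos hε h1 hmin hu hpos
    exact ⟨m, Or.inl hm⟩

lemma half_add_mul_sqrt_mul_half_sub_mul_sqrt {d : ℤ} (hd : 0 ≤ d) (x y : ℤ) :
    (x + y * √d) / 2 * ((x - y * √d) / 2) = ((x ^ 2 - d * y ^ 2 : ℤ) : ℝ) / 4 := by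
  have hs : √(d : ℝ) ^ 2 = d := Real.sq_sqrt (by exact_mod_cast hd)
  push_cast
  linear_combination (-(y : ℝ) ^ 2 / 4) * hs

lemma abs_half_sub_mul_sqrt_lt_one {d x y : ℤ} (hd : 0 ≤ d) (hxy : |x ^ 2 - d * y ^ 2| = 4)
    (hw : 1 < (x + y * √d) / 2) : |(x - y * √d) / 2| < 1 := by
  have h := congrArg abs (half_add_mul_sqrt_mul_half_sub_mul_sqrt hd x y)
  have h4 : |((x ^ 2 - d * y ^ 2 : ℤ) : ℝ) / 4| = 1 := by
    rw [abs_div, ← Int.cast_abs, hxy]; norm_num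
  rw [abs_mul, abs_of_pos (zero_lt_one.trans hw), h4] at h
  nlinarith [abs_nonneg ((x - y * √d) / 2)]

lemma one_le_of_one_lt_half_add_mul_sqrt {d x y : ℤ} (hd : 0 < d) (hxy : |x ^ 2 - d * y ^ 2| = 4)
    (hw : 1 < (x + y * √d) / 2) : 1 ≤ x ∧ 1 ≤ y := by
  obtain ⟨h₁, h₂⟩ := abs_lt.mp (abs_half_sub_mul_sqrt_lt_one hd.le hxy hw)
  have hs : 0 < √(d : ℝ) := Real.sqrt_pos.mpr (by exact_mod_cast hd)
  have hx : (0 : ℝ) < x := by linarith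
  have hy : (0 : ℝ) < y := pos_of_mul_pos_left (by linarith : (0 : ℝ) < y * √d) hs.le
  exact ⟨by exact_mod_cast hx, by exact_mod_cast hy⟩

lemma lt_of_half_add_mul_sqrt_lt {d x y X Y : ℤ} (hs : 2 < √(d : ℝ))
    (hXY : X ^ 2 - d * Y ^ 2 = 4) (hX : 5 ≤ X) (hxy : |x ^ 2 - d * y ^ 2| = 4)
    (hw : 1 < (x + y * √d) / 2) (hwε : (x + y * √d) / 2 < (X + Y * √d) / 2) : y < Y := by
  have hd : 0 < d := by
    by_contra! h
    rw [Real.sqrt_eq_zero_of_nonpos (by exact_mod_cast h)] at hs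
    norm_num at hs
  obtain ⟨hx, -⟩ := one_le_of_one_lt_half_add_mul_sqrt hd hxy hw
  obtain ⟨hw'₁, hw'₂⟩ := abs_lt.mp (abs_half_sub_mul_sqrt_lt_one hd.le hxy hw)
  obtain ⟨hε'₁, hε'₂⟩ := abs_lt.mp (abs_half_sub_mul_sqrt_lt_one hd.le
    (by rw [hXY]; rfl) (hw.trans hwε))
  -- `y√d = w - w'` and `Y√d = ε - ε'` with both conjugates in `(-1, 1)`, so `(y - Y)√d < 2 < √d`.
  have hyY : y ≤ Y := by
    have : ((y : ℝ) - Y) * √d < 1 * √d := by linarith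
    have : (y : ℝ) - Y < 1 := lt_of_mul_lt_mul_right this (by linarith)
    have : (y : ℝ) < Y + 1 := by linarith
    exact Int.lt_add_one_iff.mp (by exact_mod_cast this)
  refine hyY.lt_of_ne ?_
  -- now `x < X` and `x² ∈ {X², X² - 8}`; the latter needs `X ≤ 4`
  rintro rfl
  have hxX : x < X := by exact_mod_cast (by linarith : (x : ℝ) < X)
  rcases (abs_eq (by norm_num)).mp hxy with h | h <;> nlinarith

lemma IsCoprime.isUnit_of_dvd_four_mul {R : Type*} [CommRing R] {r m : R} (hc : IsCoprime r (2 * m))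
    (h : r ∣ 4 * m) : IsUnit r := by
  have h4 : r ∣ 2 ^ 2 := by
    simpa [show (4 : R) = 2 ^ 2 by norm_num] using hc.of_mul_right_right.dvd_of_dvd_mul_right h
  exact hc.of_mul_right_left.pow_right.isUnit_of_dvd' dvd_rfl h4

section RichaudDegert

variable {n r x y : ℤ}

lemma four_lt_sq_sub_of_add_two_le (hr0 : r ≠ 0) (hy : 1 ≤ y) (hyY : |r| * (y + 1) ≤ 4 * n)
    (h : n * y + 2 ≤ x) : 4 < x ^ 2 - (n ^ 2 + r) * y ^ 2 := by
  have hr : 0 < |r| := abs_pos.mpr hr0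
  have hn : 0 ≤ n := by nlinarith
  have hx : (n * y + 2) ^ 2 ≤ x ^ 2 := pow_le_pow_left₀ (by positivity) h 2
  have hyY' : |r| * (y + 1) * y ≤ 4 * n * y := mul_le_mul_of_nonneg_right hyY (by omega)
  nlinarith [le_abs_self r]

lemma sq_sub_lt_neg_four_of_add_two_le (hr : 2 ≤ |r|) (hlt : -n < r) (hyY : |r| * (y + 1) ≤ 4 * n)
    (hx : 1 ≤ x) (hy : 1 ≤ y) (h : x + 2 ≤ n * y) : x ^ 2 - (n ^ 2 + r) * y ^ 2 < -4 := by
  have hx2 : x ^ 2 ≤ (n * y - 2) ^ 2 := pow_le_pow_left₀ (by omega) (by omega) 2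
  suffices -r * y ^ 2 < 4 * n * y - 8 by nlinarith
  rcases le_or_gt 0 r with hr0 | hr0
  · nlinarith
  rw [abs_of_neg hr0] at hr hyY
  by_contra! hge
  have hy8 : -r * y ≤ 8 := by nlinarith
  have hy2 : y ≤ 2 := by nlinarith
  interval_cases y <;> omega

/-- The case `x = ny ± 1` (with `m = ±n`) of `x² - (n² + r)y² = ±4`. For `y = 1` the bounds leave
only `(n, r) = (3, 3)`, where `4 ∣ d`, and `(4, -3)`; for `y > 1` the cofactor `2m - ry` is `±1`,
which makes `r` coprime to `2n`. -/
lemma richaudDegert_not_mul_eq_three_or_neg_five {m : ℤ} (hdvd : r ∣ 4 * n) (hlt : -n < r)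
    (hle : r ≤ n) (habs1 : r.natAbs ≠ 1) (hsf : Squarefree (n ^ 2 + r)) (hm : m = n ∨ m = -n)
    (hy : 1 ≤ y) (h : y * (2 * m - r * y) = 3 ∨ y * (2 * m - r * y) = -5) : False := by
  rcases hy.eq_or_lt with rfl | hy2
  · obtain ⟨rfl, rfl⟩ | ⟨rfl, rfl⟩ : (n = 3 ∧ r = 3) ∨ (n = 4 ∧ r = -3) := by omega
    · exact absurd (hsf 2 ⟨3, by norm_num⟩) (by norm_num [Int.isUnit_iff])
    · norm_num at hdvd
  set c := 2 * m - r * y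
  have hc2 : c ^ 2 = 1 := by
    have : -2 ≤ c ∧ c ≤ 2 := by constructor <;> rcases h with h | h <;> nlinarith
    obtain ⟨h₁, h₂⟩ := this
    interval_cases c <;> omega
  have hcop : IsCoprime r (2 * m) := ⟨-(y * c), c, by linear_combination hc2⟩
  have hdvd' : r ∣ 4 * m := by rcases hm with rfl | rfl <;> simp [hdvd]
  exact habs1 (Int.isUnit_iff_natAbs_eq.mp (hcop.isUnit_of_dvd_four_mul hdvd'))

theorem richaudDegert_abs_sq_sub_ne_four (hr0 : r ≠ 0) (hdvd : r ∣ 4 * n) (hlt : -n < r)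
    (hle : r ≤ n) (habs1 : r.natAbs ≠ 1) (habs4 : r.natAbs ≠ 4) (hsf : Squarefree (n ^ 2 + r))
    (hx : 1 ≤ x) (hy : 1 ≤ y) (hyY : |r| * (y + 1) ≤ 4 * n) :
    |x ^ 2 - (n ^ 2 + r) * y ^ 2| ≠ 4 := by
  intro h
  have hr := Int.abs_eq_natAbs r
  have h4 := (abs_eq (zero_le_four : (0 : ℤ) ≤ 4)).mp h
  obtain ⟨t, rfl⟩ : ∃ t, x = n * y + t := ⟨x - n * y, by ring⟩
  rcases (by omega : t ≤ -2 ∨ t = 0 ∨ 2 ≤ t ∨ (t = 1 ∨ t = -1)) with ht | rfl | ht | ht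
  · have := sq_sub_lt_neg_four_of_add_two_le (by omega) hlt hyY hx hy
      (by omega : n * y + t + 2 ≤ n * y)
    omega
  · have hry : |r| * y ^ 2 = 4 := by
      rw [← h, show (n * y + 0) ^ 2 - (n ^ 2 + r) * y ^ 2 = -(r * y ^ 2) by ring, abs_neg,
        abs_mul, abs_of_nonneg (sq_nonneg y)]
    have hy2 : y ≤ 2 := by nlinarith [abs_pos.mpr hr0]
    interval_cases y <;> omega
  · have := four_lt_sq_sub_of_add_two_le hr0 hy hyY (by omega : n * y + 2 ≤ n * y + t)
    omega
  · have ht2 : t ^ 2 = 1 := by rcases ht with rfl | rfl <;> rfl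
    refine richaudDegert_not_mul_eq_three_or_neg_five hdvd hlt hle habs1 hsf (m := t * n)
      (by rcases ht with rfl | rfl <;> simp) hy ?_
    rcases h4 with h4 | h4
    exacts [.inl (by linear_combination h4 - ht2), .inr (by linear_combination h4 - ht2)]

lemma exists_richaudDegert_pell (hr0 : r ≠ 0) (hdvd : r ∣ 4 * n) (hlt : -n < r)
    (hle : r ≤ n) (habs1 : r.natAbs ≠ 1) :
    ∃ X Y : ℤ, |r| * X = 4 * n ^ 2 + 2 * r ∧ |r| * Y = 4 * n ∧
      X ^ 2 - (n ^ 2 + r) * Y ^ 2 = 4 ∧ 5 ≤ X ∧ 0 ≤ Y := by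
  obtain ⟨Y, hY⟩ := (abs_dvd r _).mpr hdvd
  obtain ⟨X, hX⟩ : |r| ∣ 4 * n ^ 2 + 2 * r :=
    (abs_dvd r _).mpr (dvd_add (by simpa [mul_assoc, sq] using hdvd.mul_right n) (dvd_mul_left r 2))
  have hr : 2 ≤ |r| ∧ |r| ≤ n := by rw [Int.abs_eq_natAbs]; omega
  refine ⟨X, Y, hX.symm, hY.symm, mul_left_cancel₀ (pow_ne_zero 2 hr0) ?_, ?_, ?_⟩
  · calc r ^ 2 * (X ^ 2 - (n ^ 2 + r) * Y ^ 2)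
        = (|r| * X) ^ 2 - (n ^ 2 + r) * (|r| * Y) ^ 2 := by rw [mul_pow, mul_pow, sq_abs]; ring
      _ = r ^ 2 * 4 := by rw [← hX, ← hY]; ring
  · nlinarith [neg_abs_le r]
  · nlinarith

theorem richaudDegert_not_mem_Ioo {d X Y : ℤ} (hr0 : r ≠ 0) (hdvd : r ∣ 4 * n)
    (hlt : -n < r) (hle : r ≤ n) (habs1 : r.natAbs ≠ 1) (habs4 : r.natAbs ≠ 4)
    (hd : d = n ^ 2 + r) (hsf : Squarefree d) (hY : |r| * Y = 4 * n)
    (hXY : X ^ 2 - d * Y ^ 2 = 4) (hX : 5 ≤ X) :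
    ∀ g ∈ integralUnits (ratAdjoinSqrt d), (g : ℝ) ∉ Set.Ioo 1 ((X + Y * √d) / 2) := by
  have hd5 : 5 ≤ d := by
    have := Int.abs_eq_natAbs r
    rcases (by omega : n = 2 ∨ 3 ≤ n) with rfl | hn
    · omega
    · nlinarith
  have hs : 2 < √(d : ℝ) := by
    rw [show (2 : ℝ) = √4 by rw [show (4 : ℝ) = 2 ^ 2 by norm_num, Real.sqrt_sq zero_le_two]]
    exact Real.sqrt_lt_sqrt (by norm_num) (by exact_mod_cast (by omega : (4 : ℤ) < d))
  rintro g hg ⟨hg₁, hg₂⟩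
  obtain ⟨x, y, hgxy, hxy⟩ := (mem_integralUnits_ratAdjoinSqrt_iff hsf (by omega)).mp hg
  rw [hgxy] at hg₁ hg₂
  obtain ⟨hx, hy⟩ := one_le_of_one_lt_half_add_mul_sqrt (by omega) hxy hg₁
  have hyY : y < Y := lt_of_half_add_mul_sqrt_lt hs hXY hX hxy hg₁ hg₂
  subst hd
  exact richaudDegert_abs_sq_sub_ne_four hr0 hdvd hlt hle habs1 habs4 hsf hx hy
    (by nlinarith [abs_nonneg r]) hxy

end RichaudDegert

theorem fundamentalUnit_wide_RD_general
    (n : ℕ) (r : ℤ) (hr0 : r ≠ 0) (hdvd : r ∣ 4 * (n : ℤ))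
    (hlt : -(n : ℤ) < r) (hle : r ≤ (n : ℤ))
    (habs1 : r.natAbs ≠ 1) (habs4 : r.natAbs ≠ 4)
    (d : ℤ) (hd : d = (n : ℤ) ^ 2 + r) (hd1 : 1 < d) (hsf : Squarefree d) :
    IsIntegral ℤ ((2 * (n : ℝ) ^ 2 + r) / |(r : ℝ)| + 2 * n / |(r : ℝ)| * Real.sqrt d) ∧
    IsIntegral ℤ ((2 * (n : ℝ) ^ 2 + r) / |(r : ℝ)| + 2 * n / |(r : ℝ)| * Real.sqrt d)⁻¹ ∧
    1 < (2 * (n : ℝ) ^ 2 + r) / |(r : ℝ)| + 2 * n / |(r : ℝ)| * Real.sqrt d ∧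
    (∀ u : ℝ, (∃ a b : ℚ, u = a + b * Real.sqrt d) → u ≠ 0 →
      IsIntegral ℤ u → IsIntegral ℤ u⁻¹ →
      ∃ m : ℤ,
        u = ((2 * (n : ℝ) ^ 2 + r) / |(r : ℝ)| + 2 * n / |(r : ℝ)| * Real.sqrt d) ^ m ∨
        u = -((2 * (n : ℝ) ^ 2 + r) / |(r : ℝ)| + 2 * n / |(r : ℝ)| * Real.sqrt d) ^ m) ∧
    ((2 * (n : ℝ) ^ 2 + r) / |(r : ℝ)| + 2 * n / |(r : ℝ)| * Real.sqrt d) *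
      ((2 * (n : ℝ) ^ 2 + r) / |(r : ℝ)| - 2 * n / |(r : ℝ)| * Real.sqrt d) = 1 := by
  obtain ⟨X, Y, hX, hY, hXY, hX5, hY0⟩ := exists_richaudDegert_pell hr0 hdvd hlt hle habs1
  rw [← hd] at hXY
  have hr : |(r : ℝ)| ≠ 0 := by positivity
  have hXℝ : |(r : ℝ)| * X = 4 * (n : ℝ) ^ 2 + 2 * r := by exact_mod_cast hX
  have hYℝ : |(r : ℝ)| * Y = 4 * (n : ℝ) := by exact_mod_cast hY
  have hε : (2 * (n : ℝ) ^ 2 + r) / |(r : ℝ)| + 2 * n / |(r : ℝ)| * √d = (X + Y * √d) / 2 := by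
    field_simp
    linear_combination (-1 : ℝ) * hXℝ - √(d : ℝ) * hYℝ
  have hε' : (2 * (n : ℝ) ^ 2 + r) / |(r : ℝ)| - 2 * n / |(r : ℝ)| * √d = (X - Y * √d) / 2 := by
    field_simp
    linear_combination (-1 : ℝ) * hXℝ + √(d : ℝ) * hYℝ
  rw [hε, hε']
  have h1 : 1 < (X + Y * √d) / 2 := by
    have hXℝ : (5 : ℝ) ≤ X := by exact_mod_cast hX5
    have hYℝ : (0 : ℝ) ≤ Y := by exact_mod_cast hY0
    nlinarith [Real.sqrt_nonneg (d : ℝ)]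
  set ε := Units.mk0 ((X + Y * √d) / 2 : ℝ) (by positivity)
  have hεG : ε ∈ integralUnits (ratAdjoinSqrt d) :=
    (mem_integralUnits_ratAdjoinSqrt_iff hsf hd1).mpr ⟨X, Y, rfl, by rw [hXY]; rfl⟩
  refine ⟨hεG.2.1, hεG.2.2, h1, fun u hu hu0 hint hinv ↦ ?_, ?_⟩
  · exact Subgroup.exists_eq_zpow_or_eq_neg_zpow (neg_one_mem_integralUnits _) hεG h1
      (richaudDegert_not_mem_Ioo hr0 hdvd hlt hle habs1 habs4 hd hsf hY hXY hX5)
      (u := Units.mk0 u hu0) ⟨hu, hint, hinv⟩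
  · rw [half_add_mul_sqrt_mul_half_sub_mul_sqrt (by omega), hXY]
    norm_num

/-- Degert's theorem, case `|r| ∉ {1, 4}`: for a Richaud–Degert radicand `d = n² + r`
squarefree (`r ∣ 4n`, `−n < r ≤ n`, `|r| ∉ {1, 4}`, `d > 1`), the real number
`ε = (2n² + r)/|r| + (2n/|r|)·√d` is the fundamental unit of `ℚ(√d)`: it is an algebraic
integer, a unit of the ring of integers (its inverse is also integral), `ε > 1`, every unit
`u` of the ring of integers of `ℚ(√d)` equals `±ε^m` for some `m : ℤ`, and its norm
`ε·ε′` equals `1`. -/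
theorem fundamentalUnit_wide_RD
    (n : ℕ) (hn : 0 < n) (r : ℤ) (hr0 : r ≠ 0) (hdvd : r ∣ 4 * (n : ℤ))
    (hlt : -(n : ℤ) < r) (hle : r ≤ (n : ℤ))
    (habs1 : r.natAbs ≠ 1) (habs4 : r.natAbs ≠ 4)
    (d : ℤ) (hd : d = (n : ℤ) ^ 2 + r) (hd1 : 1 < d) (hsf : Squarefree d) :
    IsIntegral ℤ ((2 * (n : ℝ) ^ 2 + r) / |(r : ℝ)| + 2 * n / |(r : ℝ)| * Real.sqrt d) ∧
    IsIntegral ℤ ((2 * (n : ℝ) ^ 2 + r) / |(r : ℝ)| + 2 * n / |(r : ℝ)| * Real.sqrt d)⁻¹ ∧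
    1 < (2 * (n : ℝ) ^ 2 + r) / |(r : ℝ)| + 2 * n / |(r : ℝ)| * Real.sqrt d ∧
    (∀ u : ℝ, (∃ a b : ℚ, u = a + b * Real.sqrt d) → u ≠ 0 →
      IsIntegral ℤ u → IsIntegral ℤ u⁻¹ →
      ∃ m : ℤ,
        u = ((2 * (n : ℝ) ^ 2 + r) / |(r : ℝ)| + 2 * n / |(r : ℝ)| * Real.sqrt d) ^ m ∨
        u = -((2 * (n : ℝ) ^ 2 + r) / |(r : ℝ)| + 2 * n / |(r : ℝ)| * Real.sqrt d) ^ m) ∧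
    ((2 * (n : ℝ) ^ 2 + r) / |(r : ℝ)| + 2 * n / |(r : ℝ)| * Real.sqrt d) *
      ((2 * (n : ℝ) ^ 2 + r) / |(r : ℝ)| - 2 * n / |(r : ℝ)| * Real.sqrt d) = 1 :=
  fundamentalUnit_wide_RD_general n r hr0 hdvd hlt hle habs1 habs4 d hd hd1 hsf
end
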